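/- arXiv:1907.08608 — 3 statements merged into one kernel-verified Lean document; each statement's English description precedes it below -/
import Mathlib

section
/- Let E be a field of characteristic different from 2, let a ∈ E with √a ∉ E, and set L = E(√a) with σ the nontrivial element of Gal(L/E). Let t ∈ L×. Then L(√t) is Galois over E if and only if Nm_{L/E}(t) = t·σ(t) is a square in L×. -/
open Polynomial IntermediateField

theorem quad_span {A B : Type*} [Field A] [Field B] [Algebra A B]
    (hd : Module.finrank A B = 2) {b : B} (hb : b ∉ Set.range (algebraMap A B)) (x : B) :
    ∃ u v : A, x = algebraMap A B u + algebraMap A B v * b := by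
  have hli : LinearIndependent A ![(1 : B), b] :=
    (LinearIndependent.pair_iff' one_ne_zero).mpr
      (fun a ha => hb ⟨a, by simpa [Algebra.smul_def] using ha⟩)
  have hsp := hli.span_eq_top_of_card_eq_finrank (by simp [hd])
  have hx : x ∈ Submodule.span A (Set.range ![(1:B), b]) := by rw [hsp]; trivial
  rw [show Set.range ![(1:B), b] = {(1:B), b} by
    simp [Matrix.range_cons, Matrix.range_empty, Set.pair_comm]] at hx
  obtain ⟨u, v, huv⟩ := Submodule.mem_span_pair.mp hx
  exact ⟨u, v, by rw [← huv]; simp [Algebra.smul_def]⟩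

theorem sq_eq_sq_field {B : Type*} [Field B] {x y : B} (h : x^2 = y^2) : x = y ∨ x = -y := by
  have h0 : (x - y) * (x + y) = 0 := by linear_combination h
  rcases mul_eq_zero.mp h0 with h' | h'
  · exact Or.inl (sub_eq_zero.mp h')
  · exact Or.inr (eq_neg_of_add_eq_zero_left h')

set_option maxHeartbeats 1000000 in
/-- Let `E` be a field of characteristic different from 2, let `a ∈ E` with
`√a ∉ E`, and set `L = E(√a)` with `σ` the nontrivial element of `Gal(L/E)`. Let `t ∈ Lˣ`.
Then `L(√t)` is Galois over `E` if and only if `Nm_{L/E}(t) = t·σ(t)` is a square in `Lˣ`. -/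
theorem stmt_0 {E L M : Type*} [Field E] [Field L] [Field M]
    [Algebra E L] [Algebra L M] [Algebra E M] [IsScalarTower E L M] [IsAlgClosed M]
    (hchar : ringChar E ≠ 2)
    (a : E) (hnsq : ¬ ∃ y : E, y ^ 2 = a)
    (ra : L) (hra : ra ^ 2 = algebraMap E L a)
    (hdim : Module.finrank E L = 2)
    (σ : L ≃ₐ[E] L) (hσ : σ ≠ 1)
    (t : L) (ht : t ≠ 0)
    (r : M) (hr : r ^ 2 = algebraMap L M t) :
    IsGalois E (IntermediateField.adjoin E (Set.range (algebraMap L M) ∪ {r}))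
      ↔ ∃ s : L, s ≠ 0 ∧ t * σ t = s ^ 2 := by
  set φ : L →+* M := (algebraMap L M) with hφ
  set K : IntermediateField E M :=
    IntermediateField.adjoin E (Set.range (algebraMap L M) ∪ {r}) with hK
  have hφinj : Function.Injective φ := φ.injective
  have hEL : Function.Injective (algebraMap E L) := (algebraMap E L).injective
  -- characteristic facts
  have h2E : (2:E) ≠ 0 := by
    intro h2
    have hd : ringChar E ∣ 2 := ringChar.dvd (by exact_mod_cast h2)
    rcases (Nat.prime_two.eq_one_or_self_of_dvd _ hd) with h | h
    · exact CharP.ringChar_ne_one h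
    · exact hchar h
  have h2L : (2:L) ≠ 0 := by
    intro h2
    apply h2E
    apply hEL
    rw [map_ofNat, map_zero, h2]
  have ha0 : a ≠ 0 := fun h => hnsq ⟨0, by simp [h]⟩
  have hraE : ra ∉ Set.range (algebraMap E L) := by
    rintro ⟨y, hy⟩
    exact hnsq ⟨y, hEL (by rw [map_pow, hy, hra])⟩
  have hspanL : ∀ x : L, ∃ u v : E, x = algebraMap E L u + algebraMap E L v * ra :=
    quad_span hdim hraE
  have hra0 : ra ≠ 0 := by
    intro h
    apply ha0
    apply hEL
    rw [map_zero, ← hra, h]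
    ring
  -- sigma facts
  have hσra : σ ra = -ra := by
    have h1 : (σ ra)^2 = ra^2 := by rw [← map_pow, hra, AlgEquiv.commutes]
    rcases sq_eq_sq_field h1 with h | h
    · exfalso
      apply hσ
      ext x
      obtain ⟨u, v, rfl⟩ := hspanL x
      simp [map_add, map_mul, AlgEquiv.commutes, h]
    · exact h
  have hσσ : ∀ x, σ (σ x) = x := by
    intro x
    obtain ⟨u, v, rfl⟩ := hspanL x
    simp [map_add, map_mul, AlgEquiv.commutes, hσra]
  have hfixE : ∀ x : L, σ x = x → ∃ u : E, algebraMap E L u = x := by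
    intro x hx
    obtain ⟨u, v, rfl⟩ := hspanL x
    rw [map_add, map_mul, AlgEquiv.commutes, AlgEquiv.commutes, hσra] at hx
    have hv : algebraMap E L v * ra = 0 := by
      have h2 : (2 : L) * (algebraMap E L v * ra) = 0 := by linear_combination -hx
      rcases mul_eq_zero.mp h2 with h | h
      · exact absurd h h2L
      · exact h
    rcases mul_eq_zero.mp hv with h | h
    · exact ⟨u, by rw [h]; ring⟩
    · exact absurd h hra0
  -- membership facts
  have hrK : r ∈ K := subset_adjoin _ _ (Or.inr rfl)
  have hFmem : ∀ x : L, φ x ∈ K := fun x => subset_adjoin _ _ (Or.inl ⟨x, rfl⟩)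
  have hφE : ∀ u : E, φ (algebraMap E L u) = algebraMap E M u := by
    intro u; rw [hφ, ← IsScalarTower.algebraMap_apply]
  have ht0M : φ t ≠ 0 := fun h => ht (hφinj (by simpa using h))
  have hr0 : r ≠ 0 := by
    intro h
    apply ht0M
    rw [← hr, h]; ring
  have hσt0 : σ t ≠ 0 := fun h => ht (by simpa using congrArg σ.symm h)
  have haM : algebraMap E M a = (φ ra)^2 := by rw [← map_pow, hra, hφE]
  have hdeg2 : (X^2 - C a : Polynomial E).natDegree = 2 := by compute_degree!
  have hp2m : (X^2 - C a : Polynomial E).Monic :=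
    monic_X_pow_sub_C a (by norm_num : (2:ℕ) ≠ 0)
  -- the key construction: splitting fields give Galois
  have galois_of : ∀ P : Polynomial E, P.Separable → ((P.rootSet M : Set M) ⊆ (K : Set M)) →
      (φ ra ∈ P.rootSet M) → (r ∈ P.rootSet M ∨ ∃ w : L, φ w = r) → IsGalois E K := by
    intro P hsep hsub hroot hrcase
    have hsplitM : (P.map (algebraMap E M)).Splits := IsAlgClosed.splits _
    have hφrange : ∀ y : L, φ y ∈ IntermediateField.adjoin E (P.rootSet M) := by
      intro y
      obtain ⟨u, v, rfl⟩ := hspanL y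
      have h1 : φ ra ∈ IntermediateField.adjoin E (P.rootSet M) := subset_adjoin _ _ hroot
      rw [map_add, map_mul, hφE, hφE]
      exact add_mem (IntermediateField.algebraMap_mem _ u) (mul_mem (IntermediateField.algebraMap_mem _ v) h1)
    have hKeq : IntermediateField.adjoin E (P.rootSet M) = K := by
      apply le_antisymm
      · exact IntermediateField.adjoin_le_iff.mpr hsub
      · rw [hK]
        apply IntermediateField.adjoin_le_iff.mpr
        rintro x (⟨y, rfl⟩ | rfl)
        · exact hφrange y
        · rcases hrcase with h | ⟨w, rfl⟩
          · exact subset_adjoin _ _ h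
          · exact hφrange w
    haveI hsf := IntermediateField.adjoin_rootSet_isSplittingField (L := M) hsplitM
    rw [hKeq] at hsf
    exact IsGalois.of_separable_splitting_field hsep
  by_cases hts : ∃ w : L, w ^ 2 = t
  · -- t is a square in L: both sides hold
    obtain ⟨w, hw⟩ := hts
    have hw0 : w ≠ 0 := by rintro rfl; exact ht (by rw [← hw]; ring)
    have hRHS : ∃ s : L, s ≠ 0 ∧ t * σ t = s ^ 2 :=
      ⟨w * σ w, mul_ne_zero hw0 (fun h => hw0 (by simpa using congrArg σ.symm h)),
        by rw [← hw, map_pow]; ring⟩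
    refine iff_of_true ?_ hRHS
    apply galois_of (X^2 - C a)
    · exact Polynomial.separable_X_pow_sub_C a (by simpa using h2E) ha0
    · intro x hx
      rw [mem_rootSet] at hx
      have hx2 : x^2 = (φ ra)^2 := by
        have h5 := hx.2
        simp only [map_sub, map_pow, aeval_X, aeval_C] at h5
        rw [haM] at h5
        linear_combination h5
      rcases sq_eq_sq_field hx2 with h | h
      · rw [h]; exact hFmem ra
      · rw [h]; exact neg_mem (hFmem ra)
    · rw [mem_rootSet]
      refine ⟨hp2m.ne_zero, ?_⟩
      simp only [map_sub, map_pow, aeval_X, aeval_C]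
      rw [haM]; ring
    · right
      have hsq : r^2 = (φ w)^2 := by rw [hr, ← map_pow, hw]
      rcases sq_eq_sq_field hsq with h | h
      · exact ⟨w, h.symm⟩
      · exact ⟨-w, by rw [map_neg, ← h]⟩
  · -- t is not a square in L
    have hrnr : r ∉ Set.range φ := by
      rintro ⟨w, hw⟩
      exact hts ⟨w, hφinj (by rw [map_pow, hw, hr])⟩
    -- span of K over L
    have hmulmem : ∀ u v u' v' : L, (φ u + φ v * r) * (φ u' + φ v' * r)
        = φ (u*u' + v*v'*t) + φ (u*v' + v*u') * r := by
      intro u v u' v'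
      simp only [map_add, map_mul]
      linear_combination (φ v * φ v') * hr
    have hd0 : ∀ u v : L, (u ≠ 0 ∨ v ≠ 0) → u^2 - v^2 * t ≠ 0 := by
      intro u v huv hd
      by_cases hv : v = 0
      · subst hv
        rcases huv with hu | hv'
        · apply hu
          have h0 : u^2 = 0 := by linear_combination hd
          exact pow_eq_zero_iff (by norm_num) |>.mp h0
        · exact hv' rfl
      · exact hts ⟨u / v, by field_simp; linear_combination hd⟩
    let S : Subfield M :=
      { carrier := {x : M | ∃ u v : L, x = φ u + φ v * r}
        zero_mem' := ⟨0, 0, by simp⟩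
        one_mem' := ⟨1, 0, by simp⟩
        add_mem' := by
          rintro x y ⟨u, v, rfl⟩ ⟨u', v', rfl⟩
          exact ⟨u + u', v + v', by simp only [map_add]; ring⟩
        neg_mem' := by
          rintro x ⟨u, v, rfl⟩
          exact ⟨-u, -v, by simp only [map_neg]; ring⟩
        mul_mem' := by
          rintro x y ⟨u, v, rfl⟩ ⟨u', v', rfl⟩
          exact ⟨u*u' + v*v'*t, u*v' + v*u', hmulmem u v u' v'⟩
        inv_mem' := by
          rintro x ⟨u, v, rfl⟩
          by_cases hx0 : φ u + φ v * r = 0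
          · rw [hx0]
            exact ⟨0, 0, by simp⟩
          · have huv : u ≠ 0 ∨ v ≠ 0 := by
              by_contra hc
              push_neg at hc
              exact hx0 (by rw [hc.1, hc.2]; simp)
            have hd : u^2 - v^2*t ≠ 0 := hd0 u v huv
            have hmul : (φ u + φ v * r) * (φ (u/(u^2 - v^2*t)) + φ (-(v/(u^2 - v^2*t))) * r) = 1 := by
              rw [hmulmem]
              have h1 : u * (u/(u^2 - v^2*t)) + v * (-(v/(u^2 - v^2*t))) * t = 1 := by
                field_simp
                ring
              have h2 : u * (-(v/(u^2 - v^2*t))) + v * (u/(u^2 - v^2*t)) = 0 := by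
                field_simp
                ring
              rw [h1, h2]
              simp
            exact ⟨u/(u^2 - v^2*t), -(v/(u^2 - v^2*t)), inv_eq_of_mul_eq_one_right hmul⟩ }
    have hS_alg : ∀ e : E, algebraMap E M e ∈ S :=
      fun e => ⟨algebraMap E L e, 0, by rw [hφE, map_zero, zero_mul, add_zero]⟩
    have hKspan : ∀ x ∈ K, ∃ u v : L, x = φ u + φ v * r := by
      intro x hx
      have hKT : K ≤ S.toIntermediateField hS_alg := by
        rw [hK]
        apply IntermediateField.adjoin_le_iff.mpr
        rintro y (⟨z, rfl⟩ | rfl)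
        · exact ⟨z, 0, by rw [map_zero, zero_mul, add_zero, hφ]⟩
        · exact ⟨0, 1, by simp⟩
      exact hKT hx
    constructor
    · -- Galois → norm is a square
      intro hGal
      haveI := hGal
      set F : IntermediateField E M := (IsScalarTower.toAlgHom E L M).fieldRange with hF
      have hFK : F ≤ K := by
        rintro x ⟨y, rfl⟩
        exact hFmem y
      let e : L ≃ₐ[E] F := AlgEquiv.ofInjectiveField (IsScalarTower.toAlgHom E L M)
      let e3 : L ≃ₐ[E] ↥(IntermediateField.restrict hFK) :=
        e.trans (IntermediateField.restrict_algEquiv hFK)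
      have he3 : ∀ x : L, (((e3 x : ↥K)) : M) = φ x := fun x => rfl
      let f' : ↥(IntermediateField.restrict hFK) →ₐ[E] M :=
        ((IsScalarTower.toAlgHom E L M).comp σ.toAlgHom).comp e3.symm.toAlgHom
      have hnormal : Normal E K := inferInstance
      obtain ⟨ψ, hψ⟩ := IntermediateField.exists_algHom_of_splits
        (fun s => ⟨hnormal.isIntegral s, IsAlgClosed.splits _⟩) f'
      have hψL : ∀ (x : L) (hx : φ x ∈ K), ψ ⟨φ x, hx⟩ = φ (σ x) := by
        intro x hx
        have hkmem : (⟨φ x, hx⟩ : ↥K) ∈ IntermediateField.restrict hFK :=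
          (IntermediateField.mem_restrict hFK _).mpr ⟨x, rfl⟩
        have h1 := DFunLike.congr_fun hψ (⟨⟨φ x, hx⟩, hkmem⟩ : ↥(IntermediateField.restrict hFK))
        have h2 : ψ ⟨φ x, hx⟩ = f' ⟨⟨φ x, hx⟩, hkmem⟩ := h1
        rw [h2]
        show φ (σ (e3.symm ⟨⟨φ x, hx⟩, hkmem⟩)) = φ (σ x)
        congr 2
        apply e3.injective
        rw [AlgEquiv.apply_symm_apply]
        apply Subtype.ext
        apply Subtype.ext
        exact (he3 x).symm
      have hrange : ψ.fieldRange = K := AlgHom.fieldRange_of_normal ψ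
      set x0 : M := ψ ⟨r, hrK⟩ with hx0
      have hx0K : x0 ∈ K := by
        rw [← hrange]; exact ⟨⟨r, hrK⟩, rfl⟩
      have hx0sq : x0^2 = φ (σ t) := by
        have h1 : (⟨r, hrK⟩ : K)^2 = ⟨φ t, hFmem t⟩ := by
          apply Subtype.ext
          push_cast
          exact hr
        rw [hx0, ← map_pow, h1, hψL]
      have hqK : x0 * r ∈ K := mul_mem hx0K hrK
      obtain ⟨u, v, hquv⟩ := hKspan _ hqK
      have hqsq : φ (t * σ t) = φ (u^2 + v^2*t) + φ (2*u*v) * r := by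
        have h2 : (x0 * r)^2 = φ (t * σ t) := by
          rw [mul_pow, hx0sq, hr, ← map_mul, mul_comm]
        rw [← h2, hquv]
        simp only [map_add, map_mul, map_pow, map_ofNat]
        linear_combination (φ v)^2 * hr
      by_cases huv0 : (2:L)*u*v = 0
      · have hkey : t * σ t = u^2 + v^2 * t := by
          apply hφinj
          rw [hqsq, huv0, map_zero, zero_mul, add_zero]
        have hcases : u = 0 ∨ v = 0 := by
          rcases mul_eq_zero.mp huv0 with h | h
          · rcases mul_eq_zero.mp h with h' | h'
            · exact absurd h' h2L
            · exact Or.inl h'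
          · exact Or.inr h
        rcases hcases with h | h
        · exfalso
          apply hts
          refine ⟨σ v, ?_⟩
          have hst : σ t = v^2 := by
            apply mul_left_cancel₀ ht
            rw [h] at hkey
            linear_combination hkey
          rw [← map_pow, ← hst, hσσ]
        · refine ⟨u, ?_, ?_⟩
          · intro hu0
            rw [h, hu0] at hkey
            exact mul_ne_zero ht hσt0 (by linear_combination hkey)
          · rw [h] at hkey
            linear_combination hkey
      · exfalso
        apply hrnr
        have hden : φ ((2:L)*u*v) ≠ 0 := fun h => huv0 (hφinj (by rw [h, map_zero]))
        refine ⟨(t*σ t - u^2 - v^2*t) / ((2:L)*u*v), ?_⟩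
        rw [map_div₀, div_eq_iff hden]
        rw [map_sub, map_sub]
        rw [map_add] at hqsq
        linear_combination hqsq
    · -- norm is a square → Galois
      rintro ⟨s, hs0, hssq⟩
      obtain ⟨b, hb⟩ := hfixE (t + σ t) (by rw [map_add, hσσ]; ring)
      obtain ⟨c, hc⟩ := hfixE (t * σ t) (by rw [map_mul, hσσ]; ring)
      set Q : Polynomial E := X^4 - C b * X^2 + C c with hQ
      have hQm : Q.Monic := by
        rw [hQ]
        monicity!
      have hbM : algebraMap E M b = φ (t + σ t) := by rw [← hφE, hb]
      have hcM : algebraMap E M c = φ (t * σ t) := by rw [← hφE, hc]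
      have hQeval : (aeval r) Q = 0 := by
        rw [hQ]
        simp only [map_add, map_sub, map_mul, map_pow, aeval_X, aeval_C]
        rw [hbM, hcM]
        have h4 : r^4 = φ t^2 := by rw [show (4:ℕ) = 2*2 from rfl, pow_mul, hr]
        rw [h4, hr, map_add, map_mul]
        ring
      have hint : IsIntegral E r := ⟨Q, hQm, hQeval⟩
      set m : Polynomial E := minpoly E r with hm
      have hmdvd : m ∣ Q := minpoly.dvd E r hQeval
      have hm_monic : m.Monic := minpoly.monic hint
      have hm_irr : Irreducible m := minpoly.irreducible hint
      have hQ0 : Q ≠ 0 := hQm.ne_zero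
      have hQdeg : Q.natDegree = 4 := by rw [hQ]; compute_degree!
      obtain ⟨g, hg⟩ := hmdvd
      have hm0 : m ≠ 0 := hm_monic.ne_zero
      have hg0 : g ≠ 0 := by rintro rfl; rw [mul_zero] at hg; exact hQ0 hg
      have hgm : g.Monic := hm_monic.of_mul_monic_left (hg ▸ hQm)
      have hdegs : m.natDegree + g.natDegree = 4 := by
        rw [← Polynomial.natDegree_mul hm0 hg0, ← hg, hQdeg]
      have hnoroot : ∀ y : E, Q.eval y ≠ 0 := by
        intro y hy
        rw [hQ] at hy
        simp only [eval_add, eval_sub, eval_mul, eval_pow, eval_X, eval_C] at hy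
        set z := algebraMap E L y with hz
        have hzL : (z^2 - t)*(z^2 - σ t) = 0 := by
          have h0 := congrArg (algebraMap E L) hy
          rw [map_zero, map_add, map_sub, map_mul, map_pow, map_pow, hb, hc] at h0
          linear_combination h0
        have hzfix : σ (z^2) = z^2 := by rw [hz, ← map_pow, AlgEquiv.commutes]
        rcases mul_eq_zero.mp hzL with h | h
        · exact hts ⟨z, by linear_combination h⟩
        · apply hts
          refine ⟨z, ?_⟩
          have h2 : z^2 = σ t := by linear_combination h
          calc z^2 = σ (z^2) := hzfix.symm
            _ = σ (σ t) := by rw [h2]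
            _ = t := hσσ t
      have hmdeg : m.natDegree = 2 ∨ m.natDegree = 4 := by
        have h1 : m.natDegree ≠ 0 := (minpoly.natDegree_pos hint).ne'
        have h2 : m.natDegree ≠ 1 := by
          intro h
          obtain ⟨y, hy⟩ := minpoly.natDegree_eq_one_iff.mp h
          exact hrnr ⟨algebraMap E L y, by rw [hφE, hy]⟩
        have h3 : m.natDegree ≠ 3 := by
          intro h
          have hgdeg : g.natDegree = 1 := by omega
          have hgeq := hgm.eq_X_add_C hgdeg
          apply hnoroot (-(g.coeff 0))
          rw [hg, eval_mul, hgeq]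
          simp
        omega
      have hm_sep : m.Separable := by
        rw [Polynomial.separable_iff_derivative_ne_zero hm_irr]
        intro hder
        rcases hmdeg with h2 | h4
        · have hco : (derivative m).coeff 1 = m.coeff 2 * 2 := by
            rw [Polynomial.coeff_derivative]; norm_num
          rw [hder, coeff_zero] at hco
          have hc2 : m.coeff 2 = 1 := by rw [← h2]; exact hm_monic.coeff_natDegree
          rw [hc2] at hco
          exact h2E (by linear_combination -hco)
        · have hco : (derivative m).coeff 3 = m.coeff 4 * 4 := by
            rw [Polynomial.coeff_derivative]; norm_num
          rw [hder, coeff_zero] at hco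
          have hc4 : m.coeff 4 = 1 := by rw [← h4]; exact hm_monic.coeff_natDegree
          rw [hc4] at hco
          have h4E : (4:E) = 2*2 := by norm_num
          rw [h4E] at hco
          exact (mul_ne_zero h2E h2E) (by linear_combination -hco)
      haveI : FiniteDimensional E L := FiniteDimensional.of_finrank_eq_succ (n := 1) hdim
      have hraint : IsIntegral E ra := IsIntegral.of_finite E ra
      have hp2eq : minpoly E ra = X^2 - C a := by
        have hdvd : minpoly E ra ∣ X^2 - C a := minpoly.dvd E ra (by
          simp only [map_sub, map_pow, aeval_X, aeval_C]
          rw [hra]; ring)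
        obtain ⟨h, hh⟩ := hdvd
        have hmm : (minpoly E ra).Monic := minpoly.monic hraint
        have hne1 : (minpoly E ra).natDegree ≠ 1 := by
          intro h1
          obtain ⟨y, hy⟩ := minpoly.natDegree_eq_one_iff.mp h1
          exact hraE ⟨y, hy⟩
        have hpos := minpoly.natDegree_pos hraint
        have hh0 : h ≠ 0 := by rintro rfl; rw [mul_zero] at hh; exact hp2m.ne_zero hh
        have hhm : h.Monic := hmm.of_mul_monic_left (hh ▸ hp2m)
        have hsum : (minpoly E ra).natDegree + h.natDegree = 2 := by
          rw [← Polynomial.natDegree_mul (minpoly.ne_zero hraint) hh0, ← hh, hdeg2]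
        have hh1 : h.natDegree = 0 := by omega
        rw [hhm.natDegree_eq_zero.mp hh1, mul_one] at hh
        exact hh.symm
      have hp2irr : Irreducible (X^2 - C a : Polynomial E) := hp2eq ▸ minpoly.irreducible hraint
      have hnd : ¬ (X^2 - C a : Polynomial E) ∣ m := by
        intro hdvd
        obtain ⟨k, hk⟩ := hdvd
        rcases hm_irr.isUnit_or_isUnit hk with hu | hu
        · exact (Polynomial.not_isUnit_of_natDegree_pos _ (by rw [hdeg2]; norm_num)) hu
        · obtain ⟨e0, he0u, he0⟩ := Polynomial.isUnit_iff.mp hu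
          have hev : (aeval r) m = 0 := minpoly.aeval E r
          rw [hk, ← he0, map_mul, aeval_C] at hev
          rcases mul_eq_zero.mp hev with h | h
          · have hsq : r^2 = (φ ra)^2 := by
              simp only [map_sub, map_pow, aeval_X, aeval_C] at h
              rw [haM] at h
              linear_combination h
            rcases sq_eq_sq_field hsq with h' | h'
            · exact hrnr ⟨ra, h'.symm⟩
            · exact hrnr ⟨-ra, by rw [map_neg, ← h']⟩
          · have : algebraMap E M e0 = 0 := h
            exact he0u.ne_zero ((algebraMap E M).injective (by simpa using this))
      have hcop : IsCoprime (X^2 - C a : Polynomial E) m := (hp2irr.coprime_iff_not_dvd).mpr hnd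
      have hsep2 : (X^2 - C a : Polynomial E).Separable :=
        Polynomial.separable_X_pow_sub_C a (by simpa using h2E) ha0
      have hPsep : ((X^2 - C a) * m).Separable := hsep2.mul hm_sep hcop
      have hP0 : (X^2 - C a) * m ≠ 0 := mul_ne_zero hp2m.ne_zero hm0
      apply galois_of ((X^2 - C a) * m) hPsep
      · intro x hx
        rw [mem_rootSet] at hx
        have hx2 := hx.2
        rw [map_mul] at hx2
        rcases mul_eq_zero.mp hx2 with h | h
        · have hxsq : x^2 = (φ ra)^2 := by
            simp only [map_sub, map_pow, aeval_X, aeval_C] at h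
            rw [haM] at h
            linear_combination h
          rcases sq_eq_sq_field hxsq with h' | h'
          · rw [h']; exact hFmem ra
          · rw [h']; exact neg_mem (hFmem ra)
        · have hxQ : (aeval x) Q = 0 := by rw [hg, map_mul, h, zero_mul]
          have hfac : (x^2 - φ t) * (x^2 - φ (σ t)) = 0 := by
            rw [hQ] at hxQ
            simp only [map_add, map_sub, map_mul, map_pow, aeval_X, aeval_C] at hxQ
            rw [hbM, hcM, map_add, map_mul] at hxQ
            linear_combination hxQ
          rcases mul_eq_zero.mp hfac with h' | h'
          · have hxr : x^2 = r^2 := by rw [hr]; linear_combination h'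
            rcases sq_eq_sq_field hxr with h'' | h''
            · rw [h'']; exact hrK
            · rw [h'']; exact neg_mem hrK
          · have hst : φ (σ t) = (φ s * r⁻¹)^2 := by
              have hinv : (φ s * r⁻¹)^2 = φ (s^2) * (φ t)⁻¹ := by
                rw [mul_pow, inv_pow, hr, ← map_pow]
              rw [hinv, ← map_inv₀, ← map_mul]
              congr 1
              field_simp
              linear_combination hssq
            have hxs : x^2 = (φ s * r⁻¹)^2 := by rw [← hst]; linear_combination h'
            rcases sq_eq_sq_field hxs with h'' | h''
            · rw [h'']; exact mul_mem (hFmem s) (inv_mem hrK)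
            · rw [h'']; exact neg_mem (mul_mem (hFmem s) (inv_mem hrK))
      · rw [mem_rootSet]
        refine ⟨hP0, ?_⟩
        rw [map_mul]
        have hz : (aeval (φ ra)) (X^2 - C a : Polynomial E) = 0 := by
          simp only [map_sub, map_pow, aeval_X, aeval_C]
          rw [haM]; ring
        rw [hz, zero_mul]
      · left
        rw [mem_rootSet]
        exact ⟨hP0, by rw [map_mul, hm, minpoly.aeval, mul_zero]⟩
end

section
/- Let G be a group and A a Z[G]-module, with I_G the augmentation ideal of Z[G]. Then for every i ≥ 0, the i-th term of the lower central series of the semidirect product A ⋊ G equals (I_G^i · A) ⋊ G^{(i)}, where G^{(0)} = G and G^{(i+1)} = [G, G^{(i)}]. -/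
/-- `augPow φ i` is the (multiplicative avatar of the) submodule `I_G^i · A` of a
`ℤ[G]`-module `A`: here `A` is written multiplicatively as a commutative group `N`
with `G`-action `φ`, `I_G` is the augmentation ideal, and `I_G^{i+1}·A` is the
(sub)group generated by the elements `(g - 1)·n = φ g n * n⁻¹` with `n ∈ I_G^i·A`. -/
def augPow {G N : Type*} [Group G] [CommGroup N] (φ : G →* MulAut N) : ℕ → Subgroup N
  | 0 => ⊤
  | (i + 1) => Subgroup.closure {x : N | ∃ (g : G) (n : N), n ∈ augPow φ i ∧ x = φ g n * n⁻¹}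

section auxlemmas

open scoped commutatorElement

variable {G N : Type*} [Group G] [CommGroup N] (φ : G →* MulAut N)

private lemma augPow_map_mem {i : ℕ} (g : G) {n : N} (hn : n ∈ augPow φ i) :
    φ g n ∈ augPow φ i := by
  induction i generalizing n with
  | zero => trivial
  | succ i ih =>
    refine Subgroup.closure_induction ?_ ?_ ?_ ?_ hn
    · rintro x ⟨h, m, hm, rfl⟩
      refine Subgroup.subset_closure ⟨g * h * g⁻¹, φ g m, ih hm, ?_⟩
      simp [map_mul, map_inv]
    · simp only [map_one]; exact one_mem _
    · intro x y _ _ hx hy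
      rw [map_mul]; exact mul_mem hx hy
    · intro x _ hx
      rw [map_inv]; exact inv_mem hx

private lemma lcs_succ' {H : Type*} [Group H] (n : ℕ) :
    (⊤ : Subgroup H).lowerCentralSeries (n + 1) = ⁅(⊤ : Subgroup H).lowerCentralSeries n, ⊤⁆ := rfl

private lemma add_aux1 {M : Type*} [AddCommGroup M] (r p w q n : M) :
    (r + -p + -(q + -w)) + -(n + -q + -(p + -w)) = r + -n := by abel

private lemma grp_aux1 {M : Type*} [CommGroup M] (r p w q n : M) :
    (r * p⁻¹ * (q * w⁻¹)⁻¹) * (n * q⁻¹ * (p * w⁻¹)⁻¹)⁻¹ = r * n⁻¹ :=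
  add_aux1 (M := Additive M) r p w q n

private lemma augPow_comm_mem :
    ∀ i j : ℕ, ∀ g ∈ (⊤ : Subgroup G).lowerCentralSeries i, ∀ n ∈ augPow φ j,
      φ g n * n⁻¹ ∈ augPow φ (i + j + 1) := by
  intro i
  induction i with
  | zero =>
    intro j g _ n hn
    rw [zero_add]
    exact Subgroup.subset_closure ⟨g, n, hn, rfl⟩
  | succ i ihi =>
    intro j g hg n hn
    let S : Subgroup G :=
      { carrier := {g : G | ∀ n ∈ augPow φ j, φ g n * n⁻¹ ∈ augPow φ (i + 1 + j + 1)}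
        one_mem' := by
          intro n _
          simp only [map_one, MulAut.one_apply, mul_inv_cancel]
          exact one_mem _
        mul_mem' := by
          intro a b ha hb n hn
          have key : φ (a * b) n * n⁻¹
              = (φ a (φ b n) * (φ b n)⁻¹) * (φ b n * n⁻¹) := by
            simp [map_mul, mul_assoc]
          rw [key]
          exact mul_mem (ha _ (augPow_map_mem φ b hn)) (hb n hn)
        inv_mem' := by
          intro a ha n hn
          have h := ha _ (augPow_map_mem φ a⁻¹ hn)
          have key : φ a⁻¹ n * n⁻¹ = (φ a (φ a⁻¹ n) * (φ a⁻¹ n)⁻¹)⁻¹ := by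
            simp only [map_inv, MulAut.apply_inv_self, mul_inv_rev, inv_inv]
            try exact (mul_comm _ _)
          rw [key]
          exact inv_mem h }
    have hS : (⊤ : Subgroup G).lowerCentralSeries (i + 1) ≤ S := by
      rw [lcs_succ', Subgroup.commutator_le]
      intro u hu v _
      show ∀ n ∈ augPow φ j, φ ⁅u, v⁆ n * n⁻¹ ∈ augPow φ (i + 1 + j + 1)
      intro n hn
      set w : N := φ u⁻¹ (φ v⁻¹ n) with hw_def
      have hw : w ∈ augPow φ j := augPow_map_mem φ _ (augPow_map_mem φ _ hn)
      have hq : φ v w * w⁻¹ ∈ augPow φ (j + 1) :=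
        Subgroup.subset_closure ⟨v, w, hw, rfl⟩
      have h1 : φ u (φ v w * w⁻¹) * (φ v w * w⁻¹)⁻¹ ∈ augPow φ (i + (j + 1) + 1) :=
        ihi (j + 1) u hu _ hq
      have hp : φ u w * w⁻¹ ∈ augPow φ (i + j + 1) := ihi j u hu w hw
      have h2 : φ v (φ u w * w⁻¹) * (φ u w * w⁻¹)⁻¹ ∈ augPow φ (i + j + 1 + 1) :=
        Subgroup.subset_closure ⟨v, _, hp, rfl⟩
      have e1 : i + (j + 1) + 1 = i + 1 + j + 1 := by omega
      have e2 : i + j + 1 + 1 = i + 1 + j + 1 := by omega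
      rw [e1] at h1; rw [e2] at h2
      have key : φ ⁅u, v⁆ n * n⁻¹
          = (φ u (φ v w * w⁻¹) * (φ v w * w⁻¹)⁻¹)
            * (φ v (φ u w * w⁻¹) * (φ u w * w⁻¹)⁻¹)⁻¹ := by
        have hn' : φ v (φ u w) = n := by
          rw [hw_def]
          simp only [map_inv, MulAut.apply_inv_self]
        have hli : φ ⁅u, v⁆ n = φ u (φ v w) := by
          rw [hw_def]
          simp only [commutatorElement_def, map_mul, map_inv, MulAut.mul_apply]
        rw [hli, map_mul, map_mul, map_inv, map_inv, hn']
        exact (grp_aux1 (φ u (φ v w)) (φ u w) w (φ v w) n).symm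
      rw [key]
      exact mul_mem h1 (inv_mem h2)
    exact hS hg n hn

/-- The subgroup `(I_G^i · A) ⋊ G^{(i)}` of the semidirect product. -/
private def sdSub (i : ℕ) : Subgroup (N ⋊[φ] G) where
  carrier := {x | x.left ∈ augPow φ i ∧ x.right ∈ (⊤ : Subgroup G).lowerCentralSeries i}
  one_mem' := by
    constructor
    · simp only [SemidirectProduct.one_left]; exact one_mem _
    · simp only [SemidirectProduct.one_right]; exact one_mem _
  mul_mem' := by
    rintro a b ⟨ha1, ha2⟩ ⟨hb1, hb2⟩
    constructor
    · rw [SemidirectProduct.mul_left]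
      exact mul_mem ha1 (augPow_map_mem φ _ hb1)
    · rw [SemidirectProduct.mul_right]
      exact mul_mem ha2 hb2
  inv_mem' := by
    rintro a ⟨h1, h2⟩
    constructor
    · rw [SemidirectProduct.inv_left]
      exact augPow_map_mem φ _ (inv_mem h1)
    · rw [SemidirectProduct.inv_right]
      exact inv_mem h2

private lemma mem_sdSub {i : ℕ} {x : N ⋊[φ] G} :
    x ∈ sdSub φ i ↔ x.left ∈ augPow φ i ∧ x.right ∈ (⊤ : Subgroup G).lowerCentralSeries i :=
  Iff.rfl

private lemma add_aux2 {M : Type*} [AddCommGroup M] (a b c d : M) :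
    a + b + c + d = (c + a) + (d + b) := by abel

private lemma grp_aux2 {M : Type*} [CommGroup M] (a b c d : M) :
    a * b * c * d = (c * a) * (d * b) :=
  add_aux2 (M := Additive M) a b c d

private lemma lcs_eq (i : ℕ) :
    (⊤ : Subgroup (N ⋊[φ] G)).lowerCentralSeries i = sdSub φ i := by
  induction i with
  | zero =>
    refine le_antisymm (fun x _ => ⟨?_, ?_⟩) le_top
    · show x.left ∈ augPow φ 0; rw [augPow]; trivial
    · trivial
  | succ i ih =>
    rw [lcs_succ', ih]
    apply le_antisymm
    · rw [Subgroup.commutator_le]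
      rintro x ⟨ha, hg⟩ y -
      constructor
      · -- left component
        have key : (⁅x, y⁆ : N ⋊[φ] G).left
            = (φ (x.right * y.right * x.right⁻¹) x.left⁻¹ * x.left)
              * (φ x.right (φ (y.right * x.right⁻¹ * y.right⁻¹) y.left⁻¹ * y.left)) := by
          simp only [commutatorElement_def, SemidirectProduct.mul_left,
            SemidirectProduct.inv_left, SemidirectProduct.mul_right,
            SemidirectProduct.inv_right, map_mul, map_inv, MulAut.mul_apply, inv_inv]
          exact grp_aux2 _ _ _ _
        rw [key]
        refine mul_mem ?_ ?_
        · exact Subgroup.subset_closure ⟨x.right * y.right * x.right⁻¹, x.left⁻¹,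
            inv_mem ha, by rw [inv_inv]⟩
        · refine augPow_map_mem φ _ ?_
          have hconj : y.right * x.right⁻¹ * y.right⁻¹ ∈ (⊤ : Subgroup G).lowerCentralSeries i :=
            (inferInstance : ((⊤ : Subgroup G).lowerCentralSeries i).Normal).conj_mem _ (inv_mem hg) _
          have := augPow_comm_mem φ i 0 _ hconj y.left⁻¹ trivial
          simpa using this
      · -- right component
        have : (⁅x, y⁆ : N ⋊[φ] G).right = ⁅x.right, y.right⁆ := by
          simp [commutatorElement_def]
        rw [this, lcs_succ']
        exact Subgroup.commutator_mem_commutator hg trivial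
    · intro x hx
      obtain ⟨h1, h2⟩ := hx
      rw [← SemidirectProduct.inl_left_mul_inr_right x]
      refine mul_mem ?_ ?_
      · -- inl part
        refine Subgroup.closure_induction
          (p := fun m _ => (SemidirectProduct.inl m : N ⋊[φ] G) ∈ ⁅sdSub φ i, ⊤⁆)
          ?_ ?_ ?_ ?_ h1
        · rintro m ⟨g, k, hk, rfl⟩
          have hcomm : (SemidirectProduct.inl (φ g k * k⁻¹) : N ⋊[φ] G)
              = ⁅(SemidirectProduct.inl k : N ⋊[φ] G), SemidirectProduct.inr g⁆⁻¹ := by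
            rw [← commutatorElement_inv]
            ext <;> simp [commutatorElement_def]
          rw [hcomm]
          exact inv_mem (Subgroup.commutator_mem_commutator ⟨(by simpa using hk),
            (by simp only [SemidirectProduct.right_inl]; exact one_mem _)⟩ trivial)
        · simpa using one_mem _
        · intro a b _ _ hA hB
          rw [map_mul]; exact mul_mem hA hB
        · intro a _ hA
          rw [map_inv]; exact inv_mem hA
      · -- inr part
        have hle : (⊤ : Subgroup G).lowerCentralSeries (i + 1)
            ≤ (⁅sdSub φ i, ⊤⁆ : Subgroup (N ⋊[φ] G)).comap (SemidirectProduct.inr (φ := φ)) := by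
          rw [lcs_succ', Subgroup.commutator_le]
          intro u hu v _
          rw [Subgroup.mem_comap, map_commutatorElement]
          refine Subgroup.commutator_mem_commutator ?_ trivial
          exact ⟨(by simp only [SemidirectProduct.left_inr]; exact one_mem _),
            (by simpa using hu)⟩
        exact hle h2

end auxlemmas

/-- for every `i ≥ 0`, the `i`-th term of the lower central series of the
semidirect product `A ⋊ G` equals `(I_G^i · A) ⋊ G^{(i)}`. -/
theorem stmt_2 {G N : Type*} [Group G] [CommGroup N] (φ : G →* MulAut N) (i : ℕ)
    (x : N ⋊[φ] G) :
    x ∈ (⊤ : Subgroup (N ⋊[φ] G)).lowerCentralSeries i ↔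
      x.left ∈ augPow φ i ∧ x.right ∈ (⊤ : Subgroup G).lowerCentralSeries i := by
  rw [lcs_eq φ i]
  exact Iff.rfl
end

section
/- Let F be a field of characteristic ≠ 2, and let c ∈ F× be a non-square. Let K = F(√c), let r = √c, and let σ generate Gal(K/F). For any t ∈ K×, if both t and its conjugate σ(t) satisfy t·σ(t) ∈ (F×)², and t is not in F·(K×)², then K(√t)/F is a degree-4 Galois extension whose Galois group is cyclic of order 4 or the Klein four-group according to whether t·σ(t) ∈ c·(F×)² or t·σ(t) ∈ (F×)². -/
open IntermediateField Module Polynomial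

private lemma sq_cases18 {α : Type*} [Field α] {a b : α} (h : a ^ 2 = b ^ 2) :
    a = b ∨ a = -b := by
  have h' : (a - b) * (a + b) = 0 := by ring_nf; linear_combination h
  rcases mul_eq_zero.mp h' with h' | h'
  · exact Or.inl (sub_eq_zero.mp h')
  · exact Or.inr (eq_neg_of_add_eq_zero_left h')

private lemma ext18 {F K A : Type*} [Field F] [Field K] [Field A] [Algebra F K] [Algebra F A]
    {x : K} (htop : IntermediateField.adjoin F {x} = ⊤)
    (φ ψ : K →ₐ[F] A) (hx : φ x = ψ x) : φ = ψ := by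
  ext k
  have hk : k ∈ IntermediateField.adjoin F {x} := htop ▸ IntermediateField.mem_top
  induction hk using IntermediateField.adjoin_induction with
  | mem y hy => rw [Set.mem_singleton_iff] at hy; subst hy; exact hx
  | algebraMap a => rw [AlgHom.commutes, AlgHom.commutes]
  | add a b _ _ ha hb => rw [map_add, map_add, ha, hb]
  | inv a _ ha => rw [map_inv₀, map_inv₀, ha]
  | mul a b _ _ ha hb => rw [map_mul, map_mul, ha, hb]

private lemma quad18 {F K : Type*} [Field F] [Field K] [Algebra F K]
    (hdim : Module.finrank F K = 2) {x : K} (hx : ∀ a : F, algebraMap F K a ≠ x) :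
    IntermediateField.adjoin F {x} = ⊤ := by
  have hfd : FiniteDimensional F K := Module.finite_of_finrank_pos (by omega)
  set E := IntermediateField.adjoin F {x} with hE
  have h1 : finrank F E * finrank E K = 2 := by
    rw [← hdim]; exact Module.finrank_mul_finrank F E K
  have h2 : finrank F E ≠ 1 := by
    intro h
    rw [IntermediateField.finrank_eq_one_iff] at h
    have hm : x ∈ E := IntermediateField.mem_adjoin_simple_self F x
    rw [h, IntermediateField.mem_bot] at hm
    obtain ⟨a, ha⟩ := hm
    exact hx a ha
  have hdvd : finrank F E ∣ 2 := ⟨_, h1.symm⟩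
  have h3 : finrank F E = 2 :=
    ((Nat.prime_two.eq_one_or_self_of_dvd _ hdvd).resolve_left h2)
  refine IntermediateField.eq_of_le_of_finrank_eq le_top ?_
  rw [h3, IntermediateField.finrank_top', hdim]

private lemma sep18 {F E : Type*} [Field F] [Field E] [Algebra F E]
    [FiniteDimensional F E] (h2 : (2 : F) ≠ 0) (h4 : Module.finrank F E ∣ 4) :
    Algebra.IsSeparable F E := by
  constructor
  intro x
  show (minpoly F x).Separable
  have hint : IsIntegral F x := IsIntegral.of_finite F x
  have hirr := minpoly.irreducible hint
  rw [Polynomial.separable_iff_derivative_ne_zero hirr]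
  intro hder
  have hd : (minpoly F x).natDegree ∣ 4 := (minpoly.degree_dvd hint).trans h4
  have hd0 : 0 < (minpoly F x).natDegree := minpoly.natDegree_pos hint
  set d := (minpoly F x).natDegree with hdd
  have hco : (Polynomial.derivative (minpoly F x)).coeff (d - 1) = 0 := by
    rw [hder]; simp
  rw [Polynomial.coeff_derivative] at hco
  have hd1 : d - 1 + 1 = d := by omega
  rw [hd1] at hco
  have hlead : (minpoly F x).coeff d = 1 := (minpoly.monic hint).coeff_natDegree
  rw [hlead, one_mul] at hco
  have : ((d - 1 : ℕ) : F) + 1 = (d : F) := by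
    have h' := congrArg (fun n : ℕ => (n : F)) hd1
    push_cast at h'
    exact h'
  rw [this] at hco
  have hdcases : d = 1 ∨ d = 2 ∨ d = 4 := by
    have hle : d ≤ 4 := Nat.le_of_dvd (by norm_num) hd
    obtain ⟨k, hk⟩ := hd
    interval_cases d <;> omega
  have h4F : (4 : F) ≠ 0 := by
    intro h
    apply h2
    have : (4 : F) = 2 * 2 := by norm_num
    rcases mul_eq_zero.mp (this ▸ h) with h | h <;> exact h
  rcases hdcases with h | h | h <;> rw [h] at hco <;> norm_num at hco <;> simp_all

set_option maxHeartbeats 1600000 in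
set_option synthInstance.maxHeartbeats 400000 in
/-- `F` of characteristic `≠ 2`, `c ∈ Fˣ` a non-square, `K = F(√c)`, `σ`
generating `Gal(K/F)`, `t ∈ Kˣ` with `t·σ(t)` a square in `Kˣ` and `t ∉ F·(Kˣ)²`.
Then `K(√t)/F` is a degree-4 Galois extension, whose Galois group is cyclic of order 4
iff `t·σ(t) ∈ c·(Fˣ)²`, and is the Klein four-group (exponent 2) iff `t·σ(t) ∈ (Fˣ)²`. -/
theorem stmt_18 {F K M : Type*} [Field F] [Field K] [Field M]
    [Algebra F K] [Algebra K M] [Algebra F M] [IsScalarTower F K M] [IsAlgClosed M]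
    (hchar : ringChar F ≠ 2)
    (c : F) (hc : ¬ ∃ y : F, y ^ 2 = c)
    (rc : K) (hrc : rc ^ 2 = algebraMap F K c)
    (hdim : Module.finrank F K = 2)
    (σ : K ≃ₐ[F] K) (hσ : σ ≠ 1)
    (t : K) (ht : t ≠ 0)
    (hsq : ∃ s : K, s ^ 2 = t * σ t)
    (hns : ¬ ∃ (f : F) (k : K), t = algebraMap F K f * k ^ 2)
    (r : M) (hr : r ^ 2 = algebraMap K M t) :
    ∀ L : IntermediateField F M,
      L = IntermediateField.adjoin F (Set.range (algebraMap K M) ∪ {r}) →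
      IsGalois F L
      ∧ Module.finrank F L = 4
      ∧ (IsCyclic (L ≃ₐ[F] L) ↔
          ∃ y : F, y ≠ 0 ∧ t * σ t = algebraMap F K c * algebraMap F K y ^ 2)
      ∧ ((∀ g : L ≃ₐ[F] L, g * g = 1) ↔
          ∃ y : F, y ≠ 0 ∧ t * σ t = algebraMap F K y ^ 2) := by
  intro L hL
  subst hL
  obtain ⟨s, hs⟩ := hsq
  set i := algebraMap K M with hidef
  set L₀ := IntermediateField.adjoin F (Set.range ⇑i ∪ {r}) with hL₀def
  -- characteristic and injectivity facts
  have h2F : (2 : F) ≠ 0 := Ring.two_ne_zero hchar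
  have jinj : Function.Injective (algebraMap F K) := (algebraMap F K).injective
  have iinj : Function.Injective i := i.injective
  have jMinj : Function.Injective (algebraMap F M) := (algebraMap F M).injective
  have htow : ∀ a : F, i (algebraMap F K a) = algebraMap F M a :=
    fun a => (IsScalarTower.algebraMap_apply F K M a).symm
  -- K-side basic facts
  have hc0 : c ≠ 0 := fun h => hc ⟨0, by rw [h]; ring⟩
  have hrc0 : rc ≠ 0 := by
    intro h
    rw [h] at hrc
    apply hc0
    apply jinj
    rw [← hrc, map_zero]
    ring
  have hrcF : ∀ a : F, algebraMap F K a ≠ rc := by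
    intro a ha
    exact hc ⟨a, jinj (by rw [map_pow, ha, hrc])⟩
  have hKtop : IntermediateField.adjoin F {rc} = ⊤ := quad18 hdim hrcF
  have hσid : ∀ x : K, (∀ a : F, algebraMap F K a ≠ x) → σ x = x → False := by
    intro x hx hfix
    have h : (σ : K →ₐ[F] K) = AlgHom.id F K := ext18 (quad18 hdim hx) _ _ hfix
    exact hσ (AlgEquiv.ext fun k => DFunLike.congr_fun h k)
  have fixedσ : ∀ x : K, σ x = x → ∃ a : F, algebraMap F K a = x := by
    intro x hfix
    by_contra hnx
    push_neg at hnx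
    exact hσid x hnx hfix
  have hσrc : σ rc = -rc := by
    have h : σ rc ^ 2 = rc ^ 2 := by
      rw [← map_pow, hrc, AlgEquiv.commutes, ← hrc]
    rcases sq_cases18 h with h' | h'
    · exact absurd h' (fun h'' => hσid rc hrcF h'')
    · exact h'
  have hσσ : ∀ x : K, σ (σ x) = x := by
    have h : ((σ : K →ₐ[F] K).comp (σ : K →ₐ[F] K)) = AlgHom.id F K :=
      ext18 hKtop _ _ (by simp [hσrc])
    intro x
    exact DFunLike.congr_fun h x
  have hσt0 : σ t ≠ 0 := fun h => ht (σ.injective (by rw [h, map_zero]))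
  have hts0 : t * σ t ≠ 0 := mul_ne_zero ht hσt0
  have hs0 : s ≠ 0 := by
    intro h
    rw [h] at hs
    exact hts0 (by rw [← hs]; ring)
  have tnot : ∀ b : K, b ^ 2 ≠ t := fun b hb => hns ⟨1, b, by rw [map_one, one_mul, hb]⟩
  have htc : t ≠ algebraMap F K c := fun h => hns ⟨c, 1, by rw [h]; ring⟩
  have htσt : t ≠ σ t := by
    intro h
    obtain ⟨a, ha⟩ := fixedσ t h.symm
    exact hns ⟨a, 1, by rw [← ha]; ring⟩
  have hσtc : σ t ≠ algebraMap F K c := by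
    intro h
    apply htc
    have h2 := congrArg σ h
    rwa [hσσ, AlgEquiv.commutes] at h2
  -- the square/nonsquare dichotomy for t * σ t
  have hAorB : (∃ y : F, y ≠ 0 ∧ t * σ t = algebraMap F K c * algebraMap F K y ^ 2) ∨
      (∃ y : F, y ≠ 0 ∧ t * σ t = algebraMap F K y ^ 2) := by
    have hσs : σ s ^ 2 = s ^ 2 := by
      rw [← map_pow, hs, map_mul, hσσ]
      ring
    rcases sq_cases18 hσs with h' | h'
    · obtain ⟨y, hy⟩ := fixedσ s h'
      right
      exact ⟨y, fun h0 => hs0 (by rw [← hy, h0, map_zero]), by rw [← hs, ← hy]⟩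
    · left
      have hw : σ (s / rc) = s / rc := by rw [map_div₀, h', hσrc, neg_div_neg_eq]
      obtain ⟨y, hy⟩ := fixedσ _ hw
      have hsy : s = algebraMap F K y * rc := by
        rw [hy]
        exact (div_mul_cancel₀ s hrc0).symm
      refine ⟨y, ?_, ?_⟩
      · intro h0
        apply hs0
        rw [hsy, h0, map_zero, zero_mul]
      · rw [← hs, hsy, mul_pow, hrc]; ring
  -- M-side basic facts
  have hi0 : ∀ k : K, i k = 0 → k = 0 := fun k h => iinj (by rw [h, map_zero])
  have hit0 : i t ≠ 0 := fun h => ht (hi0 t h)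
  have his0 : i s ≠ 0 := fun h => hs0 (hi0 s h)
  have hrM : r ≠ 0 := by
    intro h
    rw [h] at hr
    exact hit0 (by rw [← hr]; ring)
  have h2M : (2 : M) ≠ 0 := by
    intro h
    apply h2F
    apply jMinj
    rw [map_ofNat, map_zero]
    exact h
  have hrc' : (i rc) ^ 2 = algebraMap F M c := by rw [← map_pow, hrc, htow]
  have hu2 : (i s / r) ^ 2 = i (σ t) := by
    rw [div_pow, ← map_pow, hs, hr, map_mul]
    exact mul_div_cancel_left₀ _ hit0
  have hirc0 : i rc ≠ 0 := fun h => hrc0 (hi0 rc h)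
  -- trace and norm of t in F
  obtain ⟨tr, htr⟩ := fixedσ (t + σ t) (by rw [map_add, hσσ]; ring)
  obtain ⟨nn, hnn⟩ := fixedσ (t * σ t) (by rw [map_mul, hσσ]; ring)
  -- the splitting polynomial
  set P : Polynomial F := (X ^ 2 - C c) * (X ^ 4 - C tr * X ^ 2 + C nn) with hPdef
  have hPm : P.Monic := by
    apply Polynomial.Monic.mul
    · exact Polynomial.monic_X_pow_sub_C c (by norm_num)
    · have he : (X : F[X]) ^ 4 - C tr * X ^ 2 + C nn = X ^ 4 + (-(C tr * X ^ 2) + C nn) := by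
        ring
      rw [he]
      apply Polynomial.monic_X_pow_add
      apply lt_of_le_of_lt (Polynomial.degree_add_le _ _)
      apply max_lt
      · rw [Polynomial.degree_neg]
        exact lt_of_le_of_lt (Polynomial.degree_C_mul_X_pow_le _ _) (by norm_num)
      · exact lt_of_le_of_lt Polynomial.degree_C_le (by norm_num)
  have hP0 : P ≠ 0 := hPm.ne_zero
  have haeval : ∀ x : M, Polynomial.aeval x P =
      (x - i rc) * (x + i rc) * ((x - r) * (x + r)) * ((x - i s / r) * (x + i s / r)) := by
    intro x
    have h1 : algebraMap F M tr = i t + i (σ t) := by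
      rw [← htow tr, htr, map_add]
    have h2 : algebraMap F M nn = i t * i (σ t) := by
      rw [← htow nn, hnn, map_mul]
    rw [hPdef]
    simp only [map_mul, map_sub, map_add, map_pow, Polynomial.aeval_X, Polynomial.aeval_C]
    rw [h1, h2, ← hrc', ← hr, ← hu2]
    ring
  have hroots : P.rootSet M = {i rc, -(i rc), r, -r, i s / r, -(i s / r)} := by
    ext x
    rw [Polynomial.mem_rootSet]
    constructor
    · rintro ⟨-, hx⟩
      rw [haeval x] at hx
      simp only [mul_eq_zero, sub_eq_zero, add_eq_zero_iff_eq_neg] at hx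
      simp only [Set.mem_insert_iff, Set.mem_singleton_iff]
      rcases hx with ((h | h) | (h | h)) | (h | h) <;> tauto
    · intro hx
      refine ⟨hP0, ?_⟩
      rw [haeval x]
      simp only [Set.mem_insert_iff, Set.mem_singleton_iff] at hx
      rcases hx with rfl | rfl | rfl | rfl | rfl | rfl <;> ring
  -- the range of K in M lands in the adjoin of rc'
  have hrange : ∀ k : K, i k ∈ IntermediateField.adjoin F {i rc, r} := by
    intro k
    have hk : k ∈ IntermediateField.adjoin F {rc} := hKtop ▸ IntermediateField.mem_top
    induction hk using IntermediateField.adjoin_induction with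
    | mem y hy =>
        rw [Set.mem_singleton_iff] at hy
        subst hy
        exact IntermediateField.subset_adjoin _ _ (by left; rfl)
    | algebraMap a =>
        rw [htow]
        exact (IntermediateField.adjoin F _).algebraMap_mem a
    | add a b _ _ ha hb => rw [map_add]; exact add_mem ha hb
    | inv a _ ha => rw [map_inv₀]; exact inv_mem ha
    | mul a b _ _ ha hb => rw [map_mul]; exact mul_mem ha hb
  have hL2 : L₀ = IntermediateField.adjoin F {i rc, r} := by
    apply le_antisymm
    · rw [hL₀def, IntermediateField.adjoin_le_iff]
      rintro x (⟨k, rfl⟩ | rfl)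
      · exact hrange k
      · exact IntermediateField.subset_adjoin _ _ (by right; rfl)
    · rw [IntermediateField.adjoin_le_iff]
      rintro x (rfl | rfl)
      · exact IntermediateField.subset_adjoin _ _ (Or.inl ⟨rc, rfl⟩)
      · exact IntermediateField.subset_adjoin _ _ (Or.inr rfl)
  have hLroots : L₀ = IntermediateField.adjoin F (P.rootSet M) := by
    rw [hroots, hL2]
    apply le_antisymm
    · rw [IntermediateField.adjoin_le_iff]
      rintro x (rfl | rfl)
      · exact IntermediateField.subset_adjoin _ _ (by left; rfl)
      · exact IntermediateField.subset_adjoin _ _ (by right; right; left; rfl)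
    · rw [IntermediateField.adjoin_le_iff]
      rintro x (rfl | rfl | rfl | rfl | rfl | rfl)
      · exact IntermediateField.subset_adjoin _ _ (by left; rfl)
      · exact neg_mem (IntermediateField.subset_adjoin _ _ (by left; rfl))
      · exact IntermediateField.subset_adjoin _ _ (by right; rfl)
      · exact neg_mem (IntermediateField.subset_adjoin _ _ (by right; rfl))
      · exact div_mem (hrange s) (IntermediateField.subset_adjoin _ _ (by right; rfl))
      · exact neg_mem (div_mem (hrange s) (IntermediateField.subset_adjoin _ _ (by right; rfl)))
  -- splitting field, hence normal
  have hsf : IsSplittingField F (IntermediateField.adjoin F (P.rootSet M)) P :=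
    IntermediateField.adjoin_rootSet_isSplittingField (IsAlgClosed.splits (P.map (algebraMap F M)))
  rw [← hLroots] at hsf
  haveI := hsf
  have hnormal : Normal F L₀ := Normal.of_isSplittingField P
  -- dimension computation
  have hintr : IsIntegral K r := by
    show ∃ p : Polynomial K, p.Monic ∧ Polynomial.eval₂ (algebraMap K M) r p = 0
    refine ⟨X ^ 2 - C t, Polynomial.monic_X_pow_sub_C t (by norm_num), ?_⟩
    rw [Polynomial.eval₂_sub, Polynomial.eval₂_pow, Polynomial.eval₂_X, Polynomial.eval₂_C, hr]
    ring
  have hirr2 : Irreducible ((X : Polynomial K) ^ 2 - C t) :=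
    X_pow_sub_C_irreducible_of_prime Nat.prime_two tnot
  have hmon2 : ((X : Polynomial K) ^ 2 - C t).Monic :=
    Polynomial.monic_X_pow_sub_C t (by norm_num)
  have hroot2 : Polynomial.aeval r ((X : Polynomial K) ^ 2 - C t) = 0 := by
    rw [map_sub, map_pow, Polynomial.aeval_X, Polynomial.aeval_C, hr, sub_self]
  have hminr : minpoly K r = X ^ 2 - C t :=
    (minpoly.eq_of_irreducible_of_monic hirr2 hroot2 hmon2).symm
  haveI hFDKr : FiniteDimensional K (IntermediateField.adjoin K {r}) :=
    IntermediateField.adjoin.finiteDimensional hintr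
  have hfinKL : finrank K (IntermediateField.adjoin K {r}) = 2 := by
    rw [IntermediateField.adjoin.finrank hintr, hminr]
    exact Polynomial.natDegree_X_pow_sub_C
  haveI hFDFK : FiniteDimensional F K := Module.finite_of_finrank_pos (by omega)
  have hιm' : ∀ k : K, i k ∈ L₀ := fun k =>
    hL₀def ▸ IntermediateField.subset_adjoin _ _ (Or.inl ⟨k, rfl⟩)
  have hres : (IntermediateField.adjoin K {r}).restrictScalars F = L₀ := by
    apply le_antisymm
    · have hK : (IntermediateField.adjoin K {r}).toSubfield ≤ L₀.toSubfield := by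
        apply IntermediateField.adjoin_le_subfield
        · rintro x ⟨k, rfl⟩
          rw [SetLike.mem_coe, IntermediateField.mem_toSubfield]
          exact hιm' k
        · rintro x rfl
          rw [SetLike.mem_coe, IntermediateField.mem_toSubfield]
          exact hL₀def ▸ IntermediateField.subset_adjoin _ _ (Or.inr rfl)
      intro x hx
      rw [IntermediateField.mem_restrictScalars] at hx
      have hx' : x ∈ (IntermediateField.adjoin K {r}).toSubfield :=
        (IntermediateField.mem_toSubfield _ _).mpr hx
      exact (IntermediateField.mem_toSubfield _ _).mp (hK hx')
    · rw [hL₀def, IntermediateField.adjoin_le_iff]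
      rintro x hx
      rw [SetLike.mem_coe, IntermediateField.mem_restrictScalars]
      rcases hx with ⟨k, rfl⟩ | rfl
      · exact (IntermediateField.adjoin K {r}).algebraMap_mem k
      · exact IntermediateField.subset_adjoin _ _ rfl
  have hfr4 : finrank F L₀ = 4 := by
    rw [← hres]
    have e1 : finrank F ((IntermediateField.adjoin K {r}).restrictScalars F) =
        finrank F (IntermediateField.adjoin K {r}) := rfl
    rw [e1, ← Module.finrank_mul_finrank F K (IntermediateField.adjoin K {r}), hdim, hfinKL]
  haveI hFD : FiniteDimensional F L₀ := Module.finite_of_finrank_pos (by rw [hfr4]; norm_num)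
  haveI hsep : Algebra.IsSeparable F L₀ := sep18 h2F (by rw [hfr4])
  haveI hGal : IsGalois F L₀ := { to_isSeparable := hsep, to_normal := hnormal }
  -- distinguished elements of L₀
  have hκm : i rc ∈ L₀ := hL₀def ▸ IntermediateField.subset_adjoin _ _ (Or.inl ⟨rc, rfl⟩)
  have hρm : r ∈ L₀ := hL₀def ▸ IntermediateField.subset_adjoin _ _ (Or.inr rfl)
  have hιm : ∀ k : K, i k ∈ L₀ := fun k =>
    hL₀def ▸ IntermediateField.subset_adjoin _ _ (Or.inl ⟨k, rfl⟩)
  set κ : L₀ := ⟨i rc, hκm⟩ with hκdef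
  set ρ : L₀ := ⟨r, hρm⟩ with hρdef
  let ι : K →ₐ[F] L₀ :=
    { toFun := fun k => ⟨i k, hιm k⟩
      map_one' := Subtype.ext (map_one i)
      map_mul' := fun a b => Subtype.ext (map_mul i a b)
      map_zero' := Subtype.ext (map_zero i)
      map_add' := fun a b => Subtype.ext (map_add i a b)
      commutes' := fun a => Subtype.ext (htow a) }
  have hικ : ι rc = κ := rfl
  have hκ2 : κ ^ 2 = algebraMap F L₀ c := Subtype.ext (by
    rw [SubmonoidClass.coe_pow]
    exact hrc')
  have hρ2 : ρ ^ 2 = ι t := Subtype.ext (by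
    rw [SubmonoidClass.coe_pow]
    exact hr)
  have hρ0 : ρ ≠ 0 := fun h => hrM (congrArg Subtype.val h)
  have hιs0 : ι s ≠ 0 := fun h => his0 (congrArg Subtype.val h)
  have hneg : -ρ ≠ ρ := by
    intro h
    have h' : (-r : M) = r := congrArg Subtype.val h
    have h2r : (2 : M) * r = 0 := by linear_combination -h'
    rcases mul_eq_zero.mp h2r with h'' | h''
    · exact h2M h''
    · exact hrM h''
  have hgen : IntermediateField.adjoin F {κ, ρ} = ⊤ := by
    apply IntermediateField.lift_injective L₀
    rw [IntermediateField.lift_adjoin, IntermediateField.lift_top]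
    rw [Set.image_insert_eq, Set.image_singleton]
    exact hL2.symm
  -- action on κ
  have hgκ : ∀ g : L₀ ≃ₐ[F] L₀, g κ = κ ∨ g κ = -κ := by
    intro g
    apply sq_cases18
    rw [← map_pow, hκ2, AlgEquiv.commutes]
  have hcase1 : ∀ g : L₀ ≃ₐ[F] L₀, g κ = κ → ∀ k : K, g (ι k) = ι k := by
    intro g hg k
    have hk : k ∈ IntermediateField.adjoin F {rc} := hKtop ▸ IntermediateField.mem_top
    induction hk using IntermediateField.adjoin_induction with
    | mem y hy =>
        rw [Set.mem_singleton_iff] at hy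
        subst hy
        rw [hικ, hg]
    | algebraMap a => rw [AlgHom.commutes, AlgEquiv.commutes]
    | add a b _ _ ha hb => simp only [map_add, ha, hb]
    | inv a _ ha => simp only [map_inv₀, ha]
    | mul a b _ _ ha hb => simp only [map_mul, ha, hb]
  have hcase2 : ∀ g : L₀ ≃ₐ[F] L₀, g κ = -κ → ∀ k : K, g (ι k) = ι (σ k) := by
    intro g hg k
    have hk : k ∈ IntermediateField.adjoin F {rc} := hKtop ▸ IntermediateField.mem_top
    induction hk using IntermediateField.adjoin_induction with
    | mem y hy =>
        rw [Set.mem_singleton_iff] at hy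
        subst hy
        rw [hικ, hg, hσrc, map_neg, hικ]
    | algebraMap a => rw [AlgEquiv.commutes, AlgHom.commutes, AlgEquiv.commutes]
    | add a b _ _ ha hb => simp only [map_add, ha, hb]
    | inv a _ ha => simp only [map_inv₀, ha]
    | mul a b _ _ ha hb => simp only [map_mul, ha, hb]
  have hgext : ∀ g g' : L₀ ≃ₐ[F] L₀, g κ = g' κ → g ρ = g' ρ → g = g' := by
    intro g g' h1 h2
    apply AlgEquiv.ext
    intro x
    have hx : x ∈ IntermediateField.adjoin F {κ, ρ} := hgen ▸ IntermediateField.mem_top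
    induction hx using IntermediateField.adjoin_induction with
    | mem y hy =>
        rcases hy with rfl | hy
        · exact h1
        · rw [Set.mem_singleton_iff] at hy
          subst hy
          exact h2
    | algebraMap a => rw [AlgEquiv.commutes, AlgEquiv.commutes]
    | add a b _ _ ha hb => rw [map_add, map_add, ha, hb]
    | inv a _ ha => rw [map_inv₀, map_inv₀, ha]
    | mul a b _ _ ha hb => rw [map_mul, map_mul, ha, hb]
  -- action on ρ
  have hsl2 : (ι s / ρ) ^ 2 = ι (σ t) := by
    have h : ι s ^ 2 = ρ ^ 2 * ι (σ t) := by
      rw [← map_pow, hs, hρ2, ← map_mul]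
    rw [div_pow, h]
    exact mul_div_cancel_left₀ _ (pow_ne_zero 2 hρ0)
  have key1 : ∀ g : L₀ ≃ₐ[F] L₀, g κ = κ → g ρ = ρ ∨ g ρ = -ρ := by
    intro g hg
    apply sq_cases18
    rw [← map_pow, hρ2, hcase1 g hg t]
  have key2 : ∀ g : L₀ ≃ₐ[F] L₀, g κ = -κ → g ρ = ι s / ρ ∨ g ρ = -(ι s / ρ) := by
    intro g hg
    apply sq_cases18
    rw [← map_pow, hρ2, hcase2 g hg t, ← hsl2]
  -- case B : exponent 2
  have hB2 : (∃ y : F, y ≠ 0 ∧ t * σ t = algebraMap F K y ^ 2) →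
      ∀ g : L₀ ≃ₐ[F] L₀, g * g = 1 := by
    rintro ⟨y, hy0, hyB⟩ g
    have hσs : σ s = s := by
      have h := sq_cases18 (a := s) (b := algebraMap F K y) (by rw [hs, hyB])
      rcases h with h | h
      · rw [h, AlgEquiv.commutes]
      · rw [h, map_neg, AlgEquiv.commutes]
    rcases hgκ g with hg | hg
    · refine hgext (g * g) 1 ?_ ?_
      · rw [AlgEquiv.mul_apply, hg, hg, AlgEquiv.one_apply]
      · rcases key1 g hg with h | h
        · rw [AlgEquiv.mul_apply, h, h, AlgEquiv.one_apply]
        · rw [AlgEquiv.mul_apply, h, map_neg, h, neg_neg, AlgEquiv.one_apply]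
    · have hgs : g (ι s) = ι s := by rw [hcase2 g hg s, hσs]
      refine hgext (g * g) 1 ?_ ?_
      · rw [AlgEquiv.mul_apply, hg, map_neg, hg, neg_neg, AlgEquiv.one_apply]
      · rcases key2 g hg with h | h
        · rw [AlgEquiv.mul_apply, h, map_div₀, hgs, h, AlgEquiv.one_apply]
          field_simp
          try ring
        · rw [AlgEquiv.mul_apply, h, map_neg, map_div₀, hgs, h, AlgEquiv.one_apply]
          field_simp
          try ring
  -- case A : an element of order 4
  have hfixtop : IntermediateField.fixedField (⊤ : Subgroup (L₀ ≃ₐ[F] L₀)) = ⊥ := by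
    have h := IsGalois.fixedField_fixingSubgroup (⊥ : IntermediateField F L₀)
    rwa [IntermediateField.fixingSubgroup_bot] at h
  have hAg : (∃ y : F, y ≠ 0 ∧ t * σ t = algebraMap F K c * algebraMap F K y ^ 2) →
      ∃ g : L₀ ≃ₐ[F] L₀, g * g ≠ 1 := by
    rintro ⟨y, hy0, hyA⟩
    have hσs : σ s = -s := by
      have h := sq_cases18 (a := s) (b := algebraMap F K y * rc)
        (by rw [hs, hyA, mul_pow, hrc]; ring)
      rcases h with h | h
      · rw [h, map_mul, AlgEquiv.commutes, hσrc]; ring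
      · rw [h, map_neg, map_mul, AlgEquiv.commutes, hσrc]; ring
    have hfix : ¬ ∀ g : L₀ ≃ₐ[F] L₀, g κ = κ := by
      intro hall
      have hmem : κ ∈ IntermediateField.fixedField (⊤ : Subgroup (L₀ ≃ₐ[F] L₀)) := by
        rintro ⟨g, -⟩
        exact hall g
      rw [hfixtop, IntermediateField.mem_bot] at hmem
      obtain ⟨a, ha⟩ := hmem
      apply hrcF a
      apply iinj
      rw [htow]
      exact congrArg Subtype.val ha
    push_neg at hfix
    obtain ⟨g₀, hg₀⟩ := hfix
    have hg₀κ : g₀ κ = -κ := (hgκ g₀).resolve_left hg₀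
    refine ⟨g₀, ?_⟩
    have hgs : g₀ (ι s) = -ι s := by rw [hcase2 g₀ hg₀κ s, hσs, map_neg]
    have hgg : (g₀ * g₀) ρ = -ρ := by
      rcases key2 g₀ hg₀κ with h | h
      · rw [AlgEquiv.mul_apply, h, map_div₀, hgs, h]
        field_simp
        try ring
      · rw [AlgEquiv.mul_apply, h, map_neg, map_div₀, hgs, h]
        field_simp
        try ring
    intro h1
    rw [h1, AlgEquiv.one_apply] at hgg
    exact hneg hgg.symm
  have hcard : Fintype.card (L₀ ≃ₐ[F] L₀) = 4 := by
    rw [← Nat.card_eq_fintype_card, IsGalois.card_aut_eq_finrank, hfr4]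
  have hcardN : Nat.card (L₀ ≃ₐ[F] L₀) = 4 := by
    rw [Nat.card_eq_fintype_card, hcard]
  have hA4 : (∃ y : F, y ≠ 0 ∧ t * σ t = algebraMap F K c * algebraMap F K y ^ 2) →
      IsCyclic (L₀ ≃ₐ[F] L₀) := by
    intro hA
    obtain ⟨g, hg⟩ := hAg hA
    have hdvd : orderOf g ∣ 4 := hcard ▸ orderOf_dvd_card
    have h1 : orderOf g ≠ 1 := by
      intro h
      apply hg
      rw [orderOf_eq_one_iff] at h
      rw [h, mul_one]
    have h2 : orderOf g ≠ 2 := by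
      intro h
      apply hg
      have h' := pow_orderOf_eq_one g
      rwa [h, pow_two] at h'
    have hord : orderOf g = 4 := by
      have hpos : 0 < orderOf g := orderOf_pos g
      have hle : orderOf g ≤ 4 := Nat.le_of_dvd (by norm_num) hdvd
      obtain ⟨k, hk⟩ := hdvd
      interval_cases h : orderOf g <;> omega
    exact isCyclic_of_orderOf_eq_card g (by rw [hord, hcardN])
  refine ⟨hGal, hfr4, ⟨?_, hA4⟩, ⟨?_, hB2⟩⟩
  · intro hcyc
    by_contra hA
    have hB := hAorB.resolve_left hA
    obtain ⟨g, hg⟩ := hcyc.exists_generator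
    have hord : orderOf g = 4 := by
      rw [orderOf_eq_card_of_forall_mem_zpowers hg, hcardN]
    have hgg : g ^ 2 = 1 := by rw [pow_two]; exact hB2 hB g
    have hdvd : orderOf g ∣ 2 := orderOf_dvd_of_pow_eq_one hgg
    rw [hord] at hdvd
    norm_num at hdvd
  · intro hexp
    by_contra hB
    have hA := hAorB.resolve_right hB
    obtain ⟨g, hg⟩ := hAg hA
    exact hg (hexp g)
end
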